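/- arXiv:1812.06278 — 2 statements merged into one kernel-verified Lean document; each statement's English description precedes it below -/
import Mathlib

section
/- Let R be a commutative ring, G a finite group whose order is invertible in R, and M an R-module equipped with an action of G by R-linear automorphisms. If a sequence (x₁, …, x_ℓ) of elements of R is weakly regular on M, then it is weakly regular on the fixed-point submodule M^G. -/
/-- The `R`-submodule of `G`-fixed points of an `R`-module `M` with a `G`-action by
`R`-linear automorphisms. -/
def fixedSubmodule (R G M : Type*) [CommRing R] [Group G] [AddCommGroup M] [Module R M]
    [DistribMulAction G M] [SMulCommClass G R M] : Submodule R M where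
  carrier := {m : M | ∀ g : G, g • m = m}
  add_mem' := fun {a b} ha hb g => by rw [smul_add, ha g, hb g]
  zero_mem' := fun g => smul_zero g
  smul_mem' := fun r m hm g => by rw [smul_comm, hm g]

/-- Weak regularity passes to module retracts. -/
lemma isWeaklyRegular_of_retract {R : Type*} [CommRing R] (rs : List R) :
    ∀ {M N : Type*} [AddCommGroup M] [Module R M] [AddCommGroup N] [Module R N]
    (ι : N →ₗ[R] M) (π : M →ₗ[R] N), π ∘ₗ ι = LinearMap.id →
    RingTheory.Sequence.IsWeaklyRegular M rs →
    RingTheory.Sequence.IsWeaklyRegular N rs := by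
  induction rs with
  | nil => intro M N _ _ _ _ ι π hπι h; exact .nil R N
  | cons r rs ih =>
    intro M N _ _ _ _ ι π hπι h
    rw [RingTheory.Sequence.isWeaklyRegular_cons_iff] at h ⊢
    have hι : Function.Injective ι := by
      have hl : Function.LeftInverse π ι := fun n => by
        simpa using congrArg (fun f => f n) hπι
      exact hl.injective
    refine ⟨fun a b hab => ?_, ih (QuotSMulTop.map r ι) (QuotSMulTop.map r π) ?_ h.2⟩
    · apply hι
      apply h.1
      simpa only [map_smul] using congrArg ι hab
    · rw [← QuotSMulTop.map_comp, hπι, QuotSMulTop.map_id]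

/-- The Reynolds (averaging) operator onto the fixed-point submodule. -/
noncomputable def reynolds (R G M : Type*) [CommRing R] [Group G] [Fintype G]
    [AddCommGroup M] [Module R M] [DistribMulAction G M] [SMulCommClass G R M]
    (hcard : IsUnit ((Fintype.card G : R))) : M →ₗ[R] fixedSubmodule R G M where
  toFun m := ⟨(↑hcard.unit⁻¹ : R) • ∑ g : G, g • m, by
    intro g₀
    rw [smul_comm]
    congr 1
    calc g₀ • ∑ g : G, g • m = ∑ g : G, (g₀ * g) • m := by
          rw [Finset.smul_sum]; exact Finset.sum_congr rfl fun g _ => (mul_smul g₀ g m).symm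
      _ = ∑ g : G, g • m := Fintype.sum_equiv (Equiv.mulLeft g₀) _ _ fun g => rfl⟩
  map_add' a b := by
    ext
    simp [smul_add, Finset.sum_add_distrib, smul_add]
  map_smul' c a := by
    ext
    simp only [RingHom.id_apply, SetLike.mk_smul_mk]
    have : ∑ g : G, g • (c • a) = c • ∑ g : G, g • a := by
      rw [Finset.smul_sum]; exact Finset.sum_congr rfl fun g _ => smul_comm g c a
    rw [this, smul_comm]
    rfl

lemma reynolds_comp_subtype (R G M : Type*) [CommRing R] [Group G] [Fintype G]
    [AddCommGroup M] [Module R M] [DistribMulAction G M] [SMulCommClass G R M]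
    (hcard : IsUnit ((Fintype.card G : R))) :
    reynolds R G M hcard ∘ₗ (fixedSubmodule R G M).subtype = LinearMap.id := by
  ext n
  show (↑hcard.unit⁻¹ : R) • ∑ g : G, g • (n : M) = (n : M)
  have : ∑ g : G, g • (n : M) = (Fintype.card G : R) • (n : M) := by
    rw [Finset.sum_congr rfl fun g _ => n.2 g]
    simp [Nat.cast_smul_eq_nsmul]
  rw [this, smul_smul, IsUnit.val_inv_mul, one_smul]

/-- If `G` is a finite group whose order is invertible in `R`, acting on an `R`-module `M`
by `R`-linear automorphisms, then any sequence of elements of `R` that is weakly regular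
on `M` is weakly regular on the fixed-point submodule `M^G`. -/
theorem isWeaklyRegular_fixedPoints {R G M : Type*} [CommRing R] [Group G] [Fintype G]
    [AddCommGroup M] [Module R M] [DistribMulAction G M] [SMulCommClass G R M]
    (hcard : IsUnit ((Fintype.card G : R)))
    (xs : List R)
    (hreg : RingTheory.Sequence.IsWeaklyRegular M xs) :
    RingTheory.Sequence.IsWeaklyRegular (fixedSubmodule R G M) xs := by
  exact isWeaklyRegular_of_retract xs (fixedSubmodule R G M).subtype
    (reynolds R G M hcard) (reynolds_comp_subtype R G M hcard) hreg
end

section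
/- Let R be a commutative ring, N an R-module, and x₁, …, x_ℓ ∈ R such that for every subset I ⊆ {1, …, ℓ}, the subsequence (x_i)_{i ∈ I} (taken in increasing order of indices) is weakly regular on N. Then the sequence (x₁·T₁, x₂·T₂, …, x_ℓ·T_ℓ) of elements of the polynomial ring R[T₁, …, T_ℓ] is weakly regular on the base-changed module N ⊗[R] R[T₁, …, T_ℓ]. -/
/-!
`R[T] ⊗ N` is the direct sum of copies of `N` indexed by the monomials `T^m`, and multiplication
by `x_j T_j` sends the `m`-component to the `(m + e_j)`-component, multiplied by `x_j`. Hence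
`(x_j T_j : j ∈ s) (R[T] ⊗ N)` consists of the elements whose `m`-component lies in
`(x_j : j ∈ s, m_j ≠ 0) N` for every `m`. For `i ∉ s` this condition does not see the exponent
of `T_i`, so `x_i T_i` is regular modulo `(x_j T_j : j ∈ s)` as soon as `x_i` is regular on
`N / (x_j : j ∈ J) N` for every finite `J ⊆ s`. For `s = {j | j < i}` this is the hypothesis
applied to the subsequence indexed by `J ∪ {i}`.
-/

open TensorProduct MvPolynomial
open scoped Pointwise

theorem Ideal.span_image_smul_top {A M ι : Type*} [CommSemiring A] [AddCommMonoid M]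
    [Module A M] (f : ι → A) (s : Set ι) :
    Ideal.span (f '' s) • (⊤ : Submodule A M) = ⨆ i ∈ s, f i • ⊤ := by
  rw [Submodule.span_smul_eq, Submodule.set_smul_eq_iSup, iSup_image]

theorem Ideal.ofList_take_ofFn {A : Type*} [CommSemiring A] {ℓ : ℕ} (y : Fin ℓ → A) (k : ℕ) :
    Ideal.ofList ((List.ofFn y).take k) = Ideal.span (y '' {j | (j : ℕ) < k}) := by
  unfold Ideal.ofList
  congr 1
  ext r
  simp only [List.mem_take_iff_getElem, List.length_ofFn, List.getElem_ofFn, lt_min_iff,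
    Set.mem_image, Set.mem_ofPred_eq]
  exact ⟨fun ⟨j, hj, hr⟩ => ⟨⟨j, _⟩, hj.1, hr⟩, fun ⟨j, hj, hr⟩ => ⟨j, ⟨hj, j.2⟩, hr⟩⟩

theorem Ideal.ofList_map_sort {A α : Type*} [CommSemiring A] [LinearOrder α] (x : α → A)
    (t : Finset α) : Ideal.ofList ((t.sort (· ≤ ·)).map x) = Ideal.span (x '' t) := by
  simp [Ideal.ofList, Set.image]

theorem Finset.sort_insert_of_forall_lt {α : Type*} [LinearOrder α] {t : Finset α} {a : α}
    (h : ∀ b ∈ t, b < a) : (insert a t).sort (· ≤ ·) = t.sort (· ≤ ·) ++ [a] := by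
  have hl : (t.sort (· ≤ ·) ++ [a]).toFinset = insert a t := by ext; simp
  have hsorted : (t.sort (· ≤ ·) ++ [a]).Pairwise (· < ·) := by
    simpa [List.pairwise_append] using ⟨(t.sortedLT_sort).pairwise, h⟩
  rw [← hl, List.toFinset_sort _ hsorted.nodup]
  exact hsorted.imp le_of_lt

theorem RingTheory.Sequence.IsWeaklyRegular.isSMulRegular_quotient_of_sort_insert
    {A M α : Type*} [CommRing A] [AddCommGroup M] [Module A M] [LinearOrder α] {x : α → A}
    {t : Finset α} {a : α} (hx : IsWeaklyRegular M (((insert a t).sort (· ≤ ·)).map x))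
    (ht : ∀ b ∈ t, b < a) :
    IsSMulRegular (M ⧸ Ideal.span (x '' t) • (⊤ : Submodule A M)) (x a) := by
  rw [Finset.sort_insert_of_forall_lt ht, List.map_append, isWeaklyRegular_append_iff,
    Ideal.ofList_map_sort] at hx
  exact (isWeaklyRegular_singleton_iff _ _).mp hx.2

theorem Finsupp.exists_eq_add_single_of_ne_zero {σ : Type*} {j : σ} {m : σ →₀ ℕ}
    (hm : m j ≠ 0) : ∃ m', m = m' + Finsupp.single j 1 := by
  obtain ⟨m', hm'⟩ :=
    exists_add_of_le (Finsupp.single_le_iff.mpr (Nat.one_le_iff_ne_zero.mpr hm))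
  exact ⟨m', hm'.trans (add_comm _ _)⟩

namespace MvPolynomial

variable {σ R N : Type*} [CommRing R] [AddCommGroup N] [Module R N]

noncomputable def shiftSMul (j : σ) (a : R) : ((σ →₀ ℕ) →₀ N) →ₗ[R] (σ →₀ ℕ) →₀ N :=
  Finsupp.lmapDomain N R (· + Finsupp.single j 1) ∘ₗ (a • LinearMap.id)

theorem shiftSMul_single (j : σ) (a : R) (m : σ →₀ ℕ) (n : N) :
    shiftSMul j a (Finsupp.single m n) = Finsupp.single (m + Finsupp.single j 1) (a • n) := by
  simp [shiftSMul, Finsupp.smul_single, Finsupp.mapDomain_single]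

theorem shiftSMul_apply_add_single (j : σ) (a : R) (f : (σ →₀ ℕ) →₀ N) (m : σ →₀ ℕ) :
    shiftSMul j a f (m + Finsupp.single j 1) = a • f m := by
  simp [shiftSMul, Finsupp.mapDomain_apply (add_left_injective _)]

theorem shiftSMul_apply_of_eq_zero (j : σ) (a : R) (f : (σ →₀ ℕ) →₀ N) {m : σ →₀ ℕ}
    (hm : m j = 0) : shiftSMul j a f m = 0 := by
  refine Finsupp.mapDomain_of_notMem_range _ _ ?_
  rintro ⟨m', rfl⟩
  simp at hm

variable (x : σ → R)

noncomputable def coeffSubmodule (s : Set σ) : Submodule R ((σ →₀ ℕ) →₀ N) :=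
  ⨅ m : σ →₀ ℕ, (Ideal.span (x '' (s ∩ m.support)) • ⊤ : Submodule R N).comap (Finsupp.lapply m)

theorem mem_coeffSubmodule {s : Set σ} {f : (σ →₀ ℕ) →₀ N} :
    f ∈ coeffSubmodule x s ↔
      ∀ m, f m ∈ Ideal.span (x '' (s ∩ m.support)) • (⊤ : Submodule R N) := by
  simp [coeffSubmodule]

theorem iSup_range_shiftSMul (s : Set σ) :
    ⨆ j ∈ s, LinearMap.range (shiftSMul (N := N) j (x j)) = coeffSubmodule x s := by
  apply le_antisymm
  · refine iSup₂_le fun j hj => ?_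
    rintro _ ⟨g, rfl⟩
    rw [mem_coeffSubmodule]
    intro m
    by_cases hm : m j = 0
    · rw [shiftSMul_apply_of_eq_zero _ _ _ hm]
      exact zero_mem _
    · obtain ⟨m', rfl⟩ := Finsupp.exists_eq_add_single_of_ne_zero hm
      rw [shiftSMul_apply_add_single]
      exact Submodule.smul_mem_smul
        (Ideal.subset_span ⟨j, ⟨hj, Finsupp.mem_support_iff.mpr hm⟩, rfl⟩) trivial
  · intro f hf
    rw [mem_coeffSubmodule] at hf
    rw [← Finsupp.sum_single f]
    refine Submodule.finsuppSum_mem _ _ _ _ fun m _ => ?_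
    suffices h : ⨆ j ∈ s ∩ m.support, x j • (⊤ : Submodule R N) ≤
        (⨆ j ∈ s, LinearMap.range (shiftSMul j (x j))).comap (Finsupp.lsingle m) from
      h (Ideal.span_image_smul_top (M := N) x _ ▸ hf m)
    refine iSup₂_le fun j hj => ?_
    rintro _ ⟨w, -, rfl⟩
    obtain ⟨m', rfl⟩ := Finsupp.exists_eq_add_single_of_ne_zero (Finsupp.mem_support_iff.mp hj.2)
    exact Submodule.mem_iSup_of_mem j <| Submodule.mem_iSup_of_mem hj.1
      ⟨Finsupp.single m' w, shiftSMul_single _ _ _ _⟩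

section DecidableEq

variable [DecidableEq σ]

variable (σ R N) in
noncomputable def coeffTensorEquiv : MvPolynomial σ R ⊗[R] N ≃ₗ[R] (σ →₀ ℕ) →₀ N :=
  (basisMonomials σ R).repr.rTensor N ≪≫ₗ TensorProduct.finsuppScalarLeft R N _

theorem coeffTensorEquiv_tmul_apply (p : MvPolynomial σ R) (n : N) (m : σ →₀ ℕ) :
    coeffTensorEquiv σ R N (p ⊗ₜ n) m = coeff m p • n := by
  simp only [coeffTensorEquiv, LinearEquiv.trans_apply, LinearEquiv.rTensor_tmul,
    TensorProduct.finsuppScalarLeft_apply_tmul_apply]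
  rfl

theorem coeffTensorEquiv_monomial_tmul (m : σ →₀ ℕ) (r : R) (n : N) :
    coeffTensorEquiv σ R N (monomial m r ⊗ₜ n) = Finsupp.single m (r • n) := by
  ext m'
  rw [coeffTensorEquiv_tmul_apply, coeff_monomial, Finsupp.single_apply]
  split_ifs <;> simp

theorem coeffTensorEquiv_C_mul_X_smul (j : σ) (a : R) (z : MvPolynomial σ R ⊗[R] N) :
    coeffTensorEquiv σ R N ((C a * X j) • z) = shiftSMul j a (coeffTensorEquiv σ R N z) := by
  induction z using TensorProduct.induction_on with
  | zero => simp
  | add z w hz hw => simp only [smul_add, map_add, hz, hw]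
  | tmul p n =>
    induction p using MvPolynomial.induction_on' with
    | monomial m r =>
      rw [TensorProduct.smul_tmul', smul_eq_mul, C_mul_X_eq_monomial, monomial_mul, add_comm,
        coeffTensorEquiv_monomial_tmul, coeffTensorEquiv_monomial_tmul, shiftSMul_single, smul_smul]
    | add p q hp hq => simp only [TensorProduct.add_tmul, smul_add, map_add, hp, hq]

theorem map_restrictScalars_C_mul_X_smul_top (j : σ) (a : R) :
    (((C a * X j : MvPolynomial σ R) • ⊤ :
        Submodule (MvPolynomial σ R) (MvPolynomial σ R ⊗[R] N)).restrictScalars R).map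
      (coeffTensorEquiv σ R N).toLinearMap = LinearMap.range (shiftSMul j a) := by
  ext f
  simp only [Submodule.mem_map, Submodule.restrictScalars_mem,
    Submodule.mem_smul_pointwise_iff_exists, Submodule.mem_top, true_and, LinearMap.mem_range]
  constructor
  · rintro ⟨_, ⟨z, rfl⟩, rfl⟩
    exact ⟨_, (coeffTensorEquiv_C_mul_X_smul j a z).symm⟩
  · rintro ⟨g, rfl⟩
    refine ⟨_, ⟨(coeffTensorEquiv σ R N).symm g, rfl⟩, ?_⟩
    rw [LinearEquiv.coe_coe, coeffTensorEquiv_C_mul_X_smul, LinearEquiv.apply_symm_apply]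

theorem mem_span_C_mul_X_smul_top_iff (s : Set σ) (z : MvPolynomial σ R ⊗[R] N) :
    z ∈ Ideal.span ((fun j => C (x j) * X j) '' s) • (⊤ : Submodule (MvPolynomial σ R) _) ↔
      coeffTensorEquiv σ R N z ∈ coeffSubmodule x s := by
  rw [← iSup_range_shiftSMul, Ideal.span_image_smul_top]
  simp_rw [← map_restrictScalars_C_mul_X_smul_top, ← Submodule.map_iSup,
    ← Submodule.restrictScalars_iSup]
  rw [Submodule.mem_map_equiv, LinearEquiv.symm_apply_apply, Submodule.restrictScalars_mem]

end DecidableEq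

theorem isSMulRegular_quotient_span_C_mul_X_smul_top {s : Set σ} {i : σ} (hi : i ∉ s)
    (hreg : ∀ t ⊆ s, t.Finite →
      IsSMulRegular (N ⧸ Ideal.span (x '' t) • (⊤ : Submodule R N)) (x i)) :
    IsSMulRegular (MvPolynomial σ R ⊗[R] N ⧸ Ideal.span ((fun j => C (x j) * X j) '' s) •
      (⊤ : Submodule (MvPolynomial σ R) (MvPolynomial σ R ⊗[R] N))) (C (x i) * X i) := by
  classical
  refine (isSMulRegular_quotient_iff_mem_of_smul_mem _ _).mpr fun z hz => ?_
  rw [mem_span_C_mul_X_smul_top_iff, coeffTensorEquiv_C_mul_X_smul, mem_coeffSubmodule] at hz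
  rw [mem_span_C_mul_X_smul_top_iff, mem_coeffSubmodule]
  intro m
  have hsupp : s ∩ (m + Finsupp.single i 1).support = s ∩ m.support := by
    ext j
    simp only [Set.mem_inter_iff, Finset.mem_coe, Finsupp.mem_support_iff, Finsupp.add_apply,
      and_congr_right_iff]
    intro hj
    rw [Finsupp.single_eq_of_ne (ne_of_mem_of_not_mem hj hi), add_zero]
  have hzm := hz (m + Finsupp.single i 1)
  rw [shiftSMul_apply_add_single, hsupp] at hzm
  exact mem_of_isSMulRegular_quotient_of_smul_mem
    (hreg _ Set.inter_subset_left (m.support.finite_toSet.inter_of_right s)) hzm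

end MvPolynomial

/-- If every subsequence (taken in increasing order of indices) of `(x 0, …, x (ℓ-1))` is
weakly regular on the `R`-module `N`, then the sequence `(x 0 • T 0, …, x (ℓ-1) • T (ℓ-1))`
of elements of the polynomial ring `R[T 0, …, T (ℓ-1)]` is weakly regular on the
base-changed module `R[T 0, …, T (ℓ-1)] ⊗[R] N`. -/
theorem isWeaklyRegular_smul_var_tensor {R N : Type*} [CommRing R]
    [AddCommGroup N] [Module R N] (ℓ : ℕ) (x : Fin ℓ → R)
    (hx : ∀ s : Finset (Fin ℓ),
      RingTheory.Sequence.IsWeaklyRegular N ((s.sort (· ≤ ·)).map x)) :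
    RingTheory.Sequence.IsWeaklyRegular
      ((MvPolynomial (Fin ℓ) R) ⊗[R] N)
      (List.ofFn fun i : Fin ℓ => MvPolynomial.C (x i) * MvPolynomial.X i) := by
  refine ⟨fun i hi => ?_⟩
  rw [Ideal.ofList_take_ofFn, List.getElem_ofFn]
  refine isSMulRegular_quotient_span_C_mul_X_smul_top x (by simp) fun t ht htfin => ?_
  lift t to Finset (Fin ℓ) using htfin
  exact (hx _).isSMulRegular_quotient_of_sort_insert fun b hb => ht hb
end
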